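/- For real s > 1, the alternating (Hasse/Euler) double-series representation holds: ζ(s) = 1/(1 − 2^{1−s}) · ∑_{n=0}^∞ 2^{−(n+1)} ∑_{k=0}^n (−1)^k C(n,k)/(k+1)^s, where C(n,k) is the binomial coefficient. -/

import Mathlib

/-!
Summing the array `C(n, k) a_k / 2^(n+1)` along rows gives `∑ a_k`, because
`∑_n C(n, k) / 2^(n+1) = 1` for every `k`; summing it along columns gives the Euler transform
`∑_n 2^(-(n+1)) ∑_k C(n, k) a_k`. The array is absolutely summable when `a` is, so both sums
agree. For `a_k = (-1)^k / (k+1)^s` the sum is `(1 - 2^(1-s)) ζ(s)`, since the odd-indexed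
terms of the zeta series add up to `2^(-s) ζ(s)`.
-/

open Finset

section EulerTransform

variable {𝕜 : Type*} [RCLike 𝕜]

theorem hasSum_choose_div_two_pow_succ (k : ℕ) :
    HasSum (fun n : ℕ => (n.choose k : 𝕜) / 2 ^ (n + 1)) 1 := by
  have hgeom := (hasSum_choose_mul_geometric_of_norm_lt_one k
    (by norm_num : ‖(2⁻¹ : 𝕜)‖ < 1)).mul_left ((2⁻¹ : 𝕜) ^ (k + 1))
  have hterm (n : ℕ) : (2⁻¹ : 𝕜) ^ (k + 1) * ((n + k).choose k * 2⁻¹ ^ n) =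
      (n + k).choose k / 2 ^ (n + k + 1) := by
    simp only [inv_pow]
    field_simp
    ring
  rw [funext hterm, show (2⁻¹ : 𝕜) ^ (k + 1) * (1 / (1 - 2⁻¹) ^ (k + 1)) = 1 by norm_num]
    at hgeom
  have h := (hasSum_nat_add_iff (f := fun n : ℕ => (n.choose k : 𝕜) / 2 ^ (n + 1)) k).mp hgeom
  rwa [sum_eq_zero fun i hi => by rw [Nat.choose_eq_zero_of_lt (mem_range.mp hi), Nat.cast_zero,
    zero_div], add_zero] at h

theorem HasSum.euler_transform {a : ℕ → 𝕜} {A : 𝕜} (ha : HasSum a A) :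
    HasSum (fun n : ℕ => 1 / 2 ^ (n + 1) * ∑ k ∈ range (n + 1), n.choose k * a k) A := by
  set F : ℕ × ℕ → 𝕜 := fun p => p.2.choose p.1 / 2 ^ (p.2 + 1) * a p.1
  have hrow (k : ℕ) : HasSum (fun n => F (k, n)) (a k) := by
    simpa using (hasSum_choose_div_two_pow_succ k).mul_right (a k)
  have hrow_norm (k : ℕ) : HasSum (fun n => ‖F (k, n)‖) ‖a k‖ := by
    simpa [F] using (hasSum_choose_div_two_pow_succ (𝕜 := ℝ) k).mul_right ‖a k‖
  have hF : Summable F := by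
    refine Summable.of_norm ((summable_prod_of_nonneg fun _ => norm_nonneg _).2
      ⟨fun k => (hrow_norm k).summable, ?_⟩)
    simpa only [(hrow_norm _).tsum_eq] using summable_norm_iff.mpr ha.summable
  have hA : ∑' p, F p = A := (hF.hasSum.prod_fiberwise hrow).unique ha
  have hswap : HasSum (fun p : ℕ × ℕ => F p.swap) A :=
    hA ▸ (Equiv.prodComm ℕ ℕ).hasSum_iff.mpr hF.hasSum
  have hcol (n : ℕ) : HasSum (fun k => F (k, n)) (∑ k ∈ range (n + 1), F (k, n)) :=
    hasSum_sum_of_ne_finset_zero fun k hk => by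
      simp [F, Nat.choose_eq_zero_of_lt (by simpa using hk : n < k)]
  convert hswap.prod_fiberwise hcol using 2 with n
  rw [mul_sum]
  exact sum_congr rfl fun k _ => by ring

end EulerTransform

theorem hasSum_one_div_nat_add_one_cpow {s : ℂ} (hs : 1 < s.re) :
    HasSum (fun n : ℕ => 1 / (n + 1 : ℂ) ^ s) (riemannZeta s) := by
  rw [zeta_eq_tsum_one_div_nat_add_one_cpow hs]
  refine Summable.hasSum ?_
  exact_mod_cast (summable_nat_add_iff 1).mpr (Complex.summable_one_div_nat_cpow.mpr hs)

theorem hasSum_neg_one_pow_div_nat_add_one_cpow {s : ℂ} (hs : 1 < s.re) :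
    HasSum (fun n : ℕ => (-1) ^ n / (n + 1 : ℂ) ^ s) ((1 - 2 ^ (1 - s)) * riemannZeta s) := by
  set z : ℕ → ℂ := fun n => 1 / (n + 1 : ℂ) ^ s
  have hz : HasSum z (riemannZeta s) := hasSum_one_div_nat_add_one_cpow hs
  have hodd : HasSum (fun m => z (2 * m + 1)) (2 ^ (-s) * riemannZeta s) := by
    have hterm (m : ℕ) : z (2 * m + 1) = 2 ^ (-s) * z m := by
      have h2 : ((2 * m + 1 : ℕ) + 1 : ℂ) = (2 : ℝ) * ((m + 1 : ℝ) : ℂ) := by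
        push_cast
        ring
      simp only [z, h2, Complex.cpow_neg,
        Complex.mul_cpow_ofReal_nonneg zero_le_two (by positivity : (0 : ℝ) ≤ m + 1)]
      push_cast
      field_simp
    simpa only [hterm] using hz.mul_left (2 ^ (-s))
  obtain ⟨E, heven⟩ : Summable fun m => z (2 * m) :=
    hz.summable.comp_injective (mul_right_injective₀ two_ne_zero)
  have hE : E + 2 ^ (-s) * riemannZeta s = riemannZeta s := (heven.even_add_odd hodd).unique hz
  have h21 : (2 : ℂ) ^ (1 - s) = 2 * 2 ^ (-s) := by
    rw [sub_eq_add_neg, Complex.cpow_add _ _ two_ne_zero, Complex.cpow_one]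
  convert HasSum.even_add_odd (f := fun n : ℕ => (-1) ^ n / (n + 1 : ℂ) ^ s)
    (by simpa [z, pow_mul] using heven) (by simpa [z, pow_succ, pow_mul, neg_div] using hodd.neg)
    using 1
  linear_combination -hE - riemannZeta s * h21

theorem one_sub_two_cpow_one_sub_ne_zero {s : ℂ} (hs : s.re ≠ 1) :
    1 - (2 : ℂ) ^ (1 - s) ≠ 0 := by
  intro h
  have hnorm := congrArg norm (sub_eq_zero.mp h)
  rw [show (2 : ℂ) = ((2 : ℝ) : ℂ) by norm_num, Complex.norm_cpow_eq_rpow_re_of_pos two_pos,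
    norm_one, ← Real.rpow_zero 2, Real.rpow_right_inj two_pos (by norm_num)] at hnorm
  exact hs (by simp at hnorm; linarith)

theorem zeta_hasse (s : ℝ) (hs : 1 < s) :
    riemannZeta (s : ℂ) =
      (1 / (1 - (2 : ℂ) ^ (1 - (s : ℂ)))) *
        ∑' n : ℕ, (1 / (2 : ℂ) ^ (n + 1)) *
          ∑ k ∈ Finset.range (n + 1),
            (-1 : ℂ) ^ k * (n.choose k : ℂ) / ((k : ℂ) + 1) ^ (s : ℂ) := by
  have hs' : 1 < (s : ℂ).re := by simpa using hs
  have hterm (n k : ℕ) : (n.choose k : ℂ) * ((-1) ^ k / (k + 1 : ℂ) ^ (s : ℂ)) =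
      (-1) ^ k * n.choose k / ((k : ℂ) + 1) ^ (s : ℂ) := by
    ring
  have hhasse := (hasSum_neg_one_pow_div_nat_add_one_cpow hs').euler_transform
  simp only [hterm] at hhasse
  rw [hhasse.tsum_eq, one_div, inv_mul_cancel_left₀ (one_sub_two_cpow_one_sub_ne_zero hs'.ne')]
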